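/- arXiv:math/0610721 — 5 statements merged into one kernel-verified Lean document; each statement's English description precedes it below -/
import Mathlib

section
/- If B₁ and B₂ are symmetric real n×n matrices, then ‖[B₁,B₂]‖² ≤ 2‖B₁‖²‖B₂‖², where [B₁,B₂] = B₁B₂ - B₂B₁ and ‖A‖² = tr(AᵀA). -/
open Matrix

/-- Squared Frobenius norm ‖A‖² = tr(AᵀA). -/
noncomputable def frobSq {n : ℕ} (A : Matrix (Fin n) (Fin n) ℝ) : ℝ :=
  (Aᵀ * A).trace

/-- Commutator [A,B] = AB - BA. -/
def mcomm {n : ℕ} (A B : Matrix (Fin n) (Fin n) ℝ) : Matrix (Fin n) (Fin n) ℝ :=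
  A * B - B * A

/-!
Diagonalize `B₁ = U D Uᵀ` with `U` orthogonal. Conjugation by `U` preserves the Frobenius norm and
commutes with the bracket, so we may take `B₁ = D = diag(d)`. Then `[D, B]ᵢⱼ = (dᵢ - dⱼ) Bᵢⱼ`, and
`(dᵢ - dⱼ)² ≤ 2 (dᵢ² + dⱼ²) ≤ 2 ‖D‖²` bounds the bracket entrywise.
-/

theorem sq_sub_le_two_mul_sum_sq {ι : Type*} [Fintype ι] (d : ι → ℝ) (i j : ι) :
    (d i - d j) ^ 2 ≤ 2 * ∑ k, d k ^ 2 := by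
  classical
  rcases eq_or_ne i j with rfl | hij
  · rw [sub_self, zero_pow two_ne_zero]
    positivity
  · have hpair : d i ^ 2 + d j ^ 2 ≤ ∑ k, d k ^ 2 := by
      rw [← Finset.sum_pair (f := fun k => d k ^ 2) hij]
      exact Finset.sum_le_univ_sum_of_nonneg fun k => sq_nonneg (d k)
    nlinarith [sq_nonneg (d i + d j)]

theorem Matrix.IsSymm.exists_orthogonal_diagonal {n : ℕ} {A : Matrix (Fin n) (Fin n) ℝ}
    (hA : A.IsSymm) :
    ∃ (U : Matrix (Fin n) (Fin n) ℝ) (d : Fin n → ℝ),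
      Uᵀ * U = 1 ∧ U * Uᵀ = 1 ∧ A = U * diagonal d * Uᵀ := by
  have hH : A.IsHermitian := isHermitian_iff_isSymm.mpr hA
  have hU := hH.eigenvectorUnitary.2
  refine ⟨hH.eigenvectorUnitary, hH.eigenvalues, mem_unitaryGroup_iff'.mp hU,
    mem_unitaryGroup_iff.mp hU, ?_⟩
  simpa [star_eq_conjTranspose] using hH.spectral_theorem

section

variable {n : ℕ}

theorem frobSq_eq_sum_sq (A : Matrix (Fin n) (Fin n) ℝ) :
    frobSq A = ∑ i, ∑ j, A i j ^ 2 := by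
  rw [frobSq, trace]
  simp only [diag_apply, mul_apply, transpose_apply, sq]
  exact Finset.sum_comm

theorem frobSq_diagonal (d : Fin n → ℝ) : frobSq (diagonal d) = ∑ k, d k ^ 2 := by
  simp [frobSq_eq_sum_sq, diagonal_apply, apply_ite (· ^ 2 : ℝ → ℝ)]

theorem frobSq_conj {U : Matrix (Fin n) (Fin n) ℝ} (hU : Uᵀ * U = 1)
    (M : Matrix (Fin n) (Fin n) ℝ) : frobSq (U * M * Uᵀ) = frobSq M := by
  have hgram : (U * M * Uᵀ)ᵀ * (U * M * Uᵀ) = U * (Mᵀ * M) * Uᵀ := by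
    simp only [transpose_mul, transpose_transpose, Matrix.mul_assoc,
      ← Matrix.mul_assoc Uᵀ U, hU, Matrix.one_mul]
  rw [frobSq, frobSq, hgram, trace_mul_cycle, ← Matrix.mul_assoc, hU, Matrix.one_mul]

theorem mcomm_conj {U : Matrix (Fin n) (Fin n) ℝ} (hU : Uᵀ * U = 1)
    (X Y : Matrix (Fin n) (Fin n) ℝ) :
    mcomm (U * X * Uᵀ) (U * Y * Uᵀ) = U * mcomm X Y * Uᵀ := by
  have hmul (P Q : Matrix (Fin n) (Fin n) ℝ) : U * P * Uᵀ * (U * Q * Uᵀ) = U * (P * Q) * Uᵀ := by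
    simp only [Matrix.mul_assoc, ← Matrix.mul_assoc Uᵀ U, hU, Matrix.one_mul]
  rw [mcomm, mcomm, hmul, hmul, Matrix.mul_sub, Matrix.sub_mul]

theorem mcomm_diagonal_apply (d : Fin n → ℝ) (B : Matrix (Fin n) (Fin n) ℝ) (i j : Fin n) :
    mcomm (diagonal d) B i j = (d i - d j) * B i j := by
  simp only [mcomm, Matrix.sub_apply, diagonal_mul, mul_diagonal]
  ring

theorem frobSq_mcomm_diagonal_le (d : Fin n → ℝ) (B : Matrix (Fin n) (Fin n) ℝ) :
    frobSq (mcomm (diagonal d) B) ≤ 2 * frobSq (diagonal d) * frobSq B := by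
  rw [frobSq_eq_sum_sq B, Finset.mul_sum, frobSq_eq_sum_sq]
  refine Finset.sum_le_sum fun i _ => ?_
  rw [Finset.mul_sum]
  refine Finset.sum_le_sum fun j _ => ?_
  rw [mcomm_diagonal_apply, frobSq_diagonal, mul_pow]
  exact mul_le_mul_of_nonneg_right (sq_sub_le_two_mul_sum_sq d i j) (sq_nonneg _)

end

theorem cdck_inequality_general {n : ℕ} (B₁ B₂ : Matrix (Fin n) (Fin n) ℝ)
    (h₁ : B₁.IsSymm) :
    frobSq (mcomm B₁ B₂) ≤ 2 * frobSq B₁ * frobSq B₂ := by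
  obtain ⟨U, d, hUtU, hUUt, rfl⟩ := h₁.exists_orthogonal_diagonal
  have hB₂ : B₂ = U * (Uᵀ * B₂ * U) * Uᵀ := by
    simp only [← Matrix.mul_assoc, hUUt, Matrix.one_mul]
    rw [Matrix.mul_assoc, hUUt, Matrix.mul_one]
  rw [hB₂, mcomm_conj hUtU, frobSq_conj hUtU, frobSq_conj hUtU, frobSq_conj hUtU]
  exact frobSq_mcomm_diagonal_le d _

/-- Chern–do Carmo–Kobayashi inequality. -/
theorem cdck_inequality {n : ℕ} (B₁ B₂ : Matrix (Fin n) (Fin n) ℝ)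
    (h₁ : B₁.IsSymm) (h₂ : B₂.IsSymm) :
    frobSq (mcomm B₁ B₂) ≤ 2 * frobSq B₁ * frobSq B₂ :=
  cdck_inequality_general B₁ B₂ h₁
end

section
/- Let n ≥ 2 and let λ, μ be real numbers. Then 2(n-1)μ²((n-2)μ² + 2(λ-μ)²) ≤ (n-1)²((1/n)(λ-μ)² + 2μ²)². -/
/-! With `t = (λ - μ)²` and `s = μ²`, the difference of the two sides equals
`(n - 1) / n² · Q(t, s)` for the binary quadratic form `Q(t, s) = (n - 1) t² - 4 n s t + 2 n³ s²`.
Its discriminant `8 n² (2 - n (n - 1))` is nonpositive once `n ≥ 2`, so `Q` is positive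
semidefinite and the inequality holds for all real `t, s`, not only for squares. -/

theorem quadraticForm_nonneg_of_two_le {n : ℝ} (hn : 2 ≤ n) (t s : ℝ) :
    0 ≤ (n - 1) * t ^ 2 - 4 * n * s * t + 2 * n ^ 3 * s ^ 2 := by
  have sos : (n - 1) * ((n - 1) * t ^ 2 - 4 * n * s * t + 2 * n ^ 3 * s ^ 2) =
      ((n - 1) * t - 2 * n * s) ^ 2 + 2 * n ^ 2 * (n - 2) * (n + 1) * s ^ 2 := by ring
  have hsos : 0 ≤ (n - 1) * ((n - 1) * t ^ 2 - 4 * n * s * t + 2 * n ^ 3 * s ^ 2) := by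
    rw [sos]
    have : 0 ≤ n - 2 := by linarith
    positivity
  exact nonneg_of_mul_nonneg_right hsos (by linarith)

theorem two_mul_le_sq_mul_sq_of_two_le {n : ℝ} (hn : 2 ≤ n) (t s : ℝ) :
    2 * (n - 1) * s * ((n - 2) * s + 2 * t) ≤ (n - 1) ^ 2 * ((1 / n) * t + 2 * s) ^ 2 := by
  have gap : (n - 1) ^ 2 * ((1 / n) * t + 2 * s) ^ 2 - 2 * (n - 1) * s * ((n - 2) * s + 2 * t) =
      (n - 1) / n ^ 2 * ((n - 1) * t ^ 2 - 4 * n * s * t + 2 * n ^ 3 * s ^ 2) := by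
    field_simp
    ring
  have hn1 : 0 ≤ n - 1 := by linarith
  have := quadraticForm_nonneg_of_two_le hn t s
  rw [← sub_nonneg, gap]
  positivity

theorem h_umbilical_ineq (n : ℕ) (hn : 2 ≤ n) (lam mu : ℝ) :
    2 * ((n : ℝ) - 1) * mu ^ 2 * (((n : ℝ) - 2) * mu ^ 2 + 2 * (lam - mu) ^ 2) ≤
      ((n : ℝ) - 1) ^ 2 * ((1 / (n : ℝ)) * (lam - mu) ^ 2 + 2 * mu ^ 2) ^ 2 :=
  two_mul_le_sq_mul_sq_of_two_le (by exact_mod_cast hn) _ _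
end

section
/- Let a, b, c, d be real numbers, set P = 2(a²+b²+c²+d²) + ab and Q² = 4(a⁴+b⁴+c⁴+d⁴) + 4a³b + 4ab³ + 3a²b² + 2a²c² + 2a²d² + 2b²c² + 2b²d² + 8c²d² - 8abc² - 8abd². Then Q² ≤ P². -/
theorem minimal_lagrangian_P_sq_sub_Q_sq (a b c d : ℝ) :
    (2 * (a ^ 2 + b ^ 2 + c ^ 2 + d ^ 2) + a * b) ^ 2 -
        (4 * (a ^ 4 + b ^ 4 + c ^ 4 + d ^ 4) + 4 * a ^ 3 * b + 4 * a * b ^ 3 + 3 * a ^ 2 * b ^ 2 +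
          2 * a ^ 2 * c ^ 2 + 2 * a ^ 2 * d ^ 2 + 2 * b ^ 2 * c ^ 2 + 2 * b ^ 2 * d ^ 2 +
          8 * c ^ 2 * d ^ 2 - 8 * a * b * c ^ 2 - 8 * a * b * d ^ 2) =
      6 * ((a + b) ^ 2 * (c ^ 2 + d ^ 2) + (a * b) ^ 2) := by
  ring

theorem minimal_lagrangian_C3_ineq (a b c d : ℝ) :
    4 * (a ^ 4 + b ^ 4 + c ^ 4 + d ^ 4) + 4 * a ^ 3 * b + 4 * a * b ^ 3 + 3 * a ^ 2 * b ^ 2 +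
        2 * a ^ 2 * c ^ 2 + 2 * a ^ 2 * d ^ 2 + 2 * b ^ 2 * c ^ 2 + 2 * b ^ 2 * d ^ 2 +
        8 * c ^ 2 * d ^ 2 - 8 * a * b * c ^ 2 - 8 * a * b * d ^ 2 ≤
      (2 * (a ^ 2 + b ^ 2 + c ^ 2 + d ^ 2) + a * b) ^ 2 := by
  rw [← sub_nonneg, minimal_lagrangian_P_sq_sub_Q_sq]
  positivity
end

section
/- Let h : ℝⁿ × ℝⁿ → ℝᵐ be a symmetric bilinear map, H = (1/n)Σᵢ h(eᵢ,eᵢ), c ∈ ℝ, and define ρ = c + (2/(n(n-1))) Σ_{i<j} (⟨h(eᵢ,eᵢ),h(eⱼ,eⱼ)⟩ - ‖h(eᵢ,eⱼ)‖²). Then ‖H‖² - ρ + c = (1/(n(n-1))) Σ_{i,j} ‖h(eᵢ,eⱼ) - δᵢⱼ H‖² ≥ 0; in particular ρ ≤ ‖H‖² + c. -/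
open Finset

def sqNorm {m : ℕ} (v : Fin m → ℝ) : ℝ := ∑ k, (v k) ^ 2

def eInner {m : ℕ} (v w : Fin m → ℝ) : ℝ := ∑ k, v k * w k

/-!
With `S = ∑_{i<j} (⟪hᵢᵢ, hⱼⱼ⟫ - ‖hᵢⱼ‖²)`, symmetry of `h` gives
`2 S = ‖∑ᵢ hᵢᵢ‖² - ∑ᵢⱼ ‖hᵢⱼ‖² = n² ‖H‖² - ∑ᵢⱼ ‖hᵢⱼ‖²`, while expanding the squares gives
`∑ᵢⱼ ‖hᵢⱼ - δᵢⱼ H‖² = ∑ᵢⱼ ‖hᵢⱼ‖² - n ‖H‖²`. Eliminating `∑ᵢⱼ ‖hᵢⱼ‖²` yields the identity, whose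
right-hand side is a sum of squares. Since `sqNorm` and `eInner` are the norm and inner product of
`EuclideanSpace ℝ (Fin m)`, the computation is carried out in any real inner product space.
-/

open RealInnerProductSpace

theorem sum_sum_eq_two_nsmul_sum_sum_lt_add_sum_diag {ι M : Type*} [Fintype ι]
    [LinearOrder ι] [AddCommMonoid M] (g : ι → ι → M) (hg : ∀ i j, g i j = g j i) :
    ∑ i, ∑ j, g i j = 2 • (∑ i, ∑ j, if i < j then g i j else 0) + ∑ i, g i i := by
  have hsplit : ∀ i j, g i j =
      ((if i < j then g i j else 0) + if j < i then g i j else 0) + if i = j then g i j else 0 := by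
    intro i j
    rcases lt_trichotomy i j with hij | rfl | hij
    · simp [hij, hij.ne, hij.not_gt]
    · simp
    · simp [hij, hij.ne', hij.not_gt]
  have hflip : (∑ i, ∑ j, if j < i then g i j else 0) = ∑ i, ∑ j, if i < j then g i j else 0 := by
    rw [sum_comm]
    simp only [hg]
  rw [sum_congr rfl fun i _ => sum_congr rfl fun j _ => hsplit i j]
  simp only [sum_add_distrib, hflip, sum_ite_eq, mem_univ, if_true, two_nsmul]

section InnerProductSpace

variable {ι E : Type*} [Fintype ι] [NormedAddCommGroup E] [InnerProductSpace ℝ E]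

theorem two_mul_sum_sum_lt_inner_sub_norm_sq [LinearOrder ι] (h : ι → ι → E)
    (hsymm : ∀ i j, h i j = h j i) :
    2 * (∑ i, ∑ j, if i < j then ⟪h i i, h j j⟫ - ‖h i j‖ ^ 2 else 0) =
      ‖∑ i, h i i‖ ^ 2 - ∑ i, ∑ j, ‖h i j‖ ^ 2 := by
  have := sum_sum_eq_two_nsmul_sum_sum_lt_add_sum_diag
    (fun i j => ⟪h i i, h j j⟫ - ‖h i j‖ ^ 2) fun i j => by rw [real_inner_comm, hsymm i j]
  simp only [real_inner_self_eq_norm_sq, sub_self, sum_const_zero, add_zero, nsmul_eq_mul,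
    Nat.cast_ofNat, sum_sub_distrib] at this
  rw [← this, ← real_inner_self_eq_norm_sq, sum_inner]
  simp only [inner_sum]

theorem sum_sum_norm_sub_ite_smul_sq [DecidableEq ι] (h : ι → ι → E) (v : E) :
    ∑ i, ∑ j, ‖h i j - (if i = j then (1 : ℝ) else 0) • v‖ ^ 2 =
      ∑ i, ∑ j, ‖h i j‖ ^ 2 - 2 * ⟪∑ i, h i i, v⟫ + Fintype.card ι * ‖v‖ ^ 2 := by
  have hterm : ∀ i j, ‖h i j - (if i = j then (1 : ℝ) else 0) • v‖ ^ 2 =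
      ‖h i j‖ ^ 2 + if i = j then ‖v‖ ^ 2 - 2 * ⟪h i i, v⟫ else 0 := by
    intro i j
    split_ifs with hij
    · subst hij; rw [one_smul, norm_sub_sq_real]; ring
    · simp
  simp only [hterm, sum_add_distrib, sum_ite_eq, mem_univ, if_true, sum_sub_distrib, sum_const,
    card_univ, nsmul_eq_mul, sum_inner, mul_sum]
  ring

theorem chen_identity [LinearOrder ι] (hn : 2 ≤ Fintype.card ι) (h : ι → ι → E)
    (hsymm : ∀ i j, h i j = h j i) {H : E} (hH : ∑ i, h i i = (Fintype.card ι : ℝ) • H) :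
    ‖H‖ ^ 2 - 2 / ((Fintype.card ι : ℝ) * (Fintype.card ι - 1)) *
        (∑ i, ∑ j, if i < j then ⟪h i i, h j j⟫ - ‖h i j‖ ^ 2 else 0) =
      1 / ((Fintype.card ι : ℝ) * (Fintype.card ι - 1)) *
        ∑ i, ∑ j, ‖h i j - (if i = j then (1 : ℝ) else 0) • H‖ ^ 2 := by
  have hn' : (2 : ℝ) ≤ Fintype.card ι := by exact_mod_cast hn
  set n : ℝ := (Fintype.card ι : ℝ)
  have hoff := two_mul_sum_sum_lt_inner_sub_norm_sq h hsymm
  rw [sum_sum_norm_sub_ite_smul_sq, hH, real_inner_smul_left, real_inner_self_eq_norm_sq]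
  rw [hH, norm_smul, mul_pow, Real.norm_eq_abs, sq_abs] at hoff
  field_simp [show n - 1 ≠ 0 by linarith, show n ≠ 0 by linarith]
  linear_combination -hoff

end InnerProductSpace

theorem sqNorm_eq_norm_toLp_sq {m : ℕ} (v : Fin m → ℝ) : sqNorm v = ‖WithLp.toLp 2 v‖ ^ 2 := by
  rw [EuclideanSpace.real_norm_sq_eq]; rfl

theorem eInner_eq_inner_toLp {m : ℕ} (v w : Fin m → ℝ) :
    eInner v w = ⟪WithLp.toLp 2 v, WithLp.toLp 2 w⟫ := by
  simp [eInner, PiLp.inner_apply, mul_comm]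

theorem sqNorm_nonneg {m : ℕ} (v : Fin m → ℝ) : 0 ≤ sqNorm v :=
  sum_nonneg fun _ _ => sq_nonneg _

/-- Algebraic content of Chen's inequality ρ ≤ ‖H‖² + c. -/
theorem chen_inequality_algebraic {n m : ℕ} (hn : 2 ≤ n)
    (h : Fin n → Fin n → (Fin m → ℝ)) (hsymm : ∀ i j, h i j = h j i) (c : ℝ) :
    let H : Fin m → ℝ := (1 / (n : ℝ)) • ∑ i, h i i
    let ρ : ℝ := c + (2 / ((n : ℝ) * ((n : ℝ) - 1))) *
      ∑ i, ∑ j, if i < j then eInner (h i i) (h j j) - sqNorm (h i j) else 0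
    sqNorm H - ρ + c =
        (1 / ((n : ℝ) * ((n : ℝ) - 1))) *
          ∑ i, ∑ j, sqNorm (h i j - (if i = j then (1 : ℝ) else 0) • H) ∧
      ρ ≤ sqNorm H + c := by
  intro H ρ
  have hcard : 2 ≤ Fintype.card (Fin n) := by simpa using hn
  have hH : ∑ i, WithLp.toLp 2 (h i i) = ((Fintype.card (Fin n)) : ℝ) • WithLp.toLp 2 H := by
    have : (n : ℝ) ≠ 0 := by positivity
    simp [H, ← WithLp.toLp_sum, smul_smul, this]
  have key := chen_identity hcard (fun i j => WithLp.toLp 2 (h i j))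
    (fun i j => by rw [hsymm]) hH
  simp only [Fintype.card_fin, ← WithLp.toLp_smul, ← WithLp.toLp_sub, ← sqNorm_eq_norm_toLp_sq,
    ← eInner_eq_inner_toLp] at key
  have hid : sqNorm H - ρ + c = (1 / ((n : ℝ) * ((n : ℝ) - 1))) *
      ∑ i, ∑ j, sqNorm (h i j - (if i = j then (1 : ℝ) else 0) • H) := by
    rw [← key]; ring
  refine ⟨hid, ?_⟩
  have hn' : (2 : ℝ) ≤ n := by exact_mod_cast hn
  have hgap : 0 ≤ sqNorm H - ρ + c := by
    rw [hid]
    exact mul_nonneg (by rw [one_div_nonneg]; nlinarith)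
      (sum_nonneg fun i _ => sum_nonneg fun j _ => sqNorm_nonneg _)
  linarith
end

section
/- Let λ, μ be real numbers, n ≥ 2, and define symmetric n×n matrices B₁,…,B_n as the trace-free parts of the shape operators of an H-umbilical Lagrangian immersion: A₁ = diag-block with A₁e₁ = λe₁, A₁eⱼ = μeⱼ (j ≥ 2); A_j (j ≥ 2) has entries (A_j)_{1j} = (A_j)_{j1} = μ and all others 0; and B_α = A_α - (tr A_α / n) I. Then Σ_{α,β=1}^n ‖[B_α,B_β]‖² = 2(n-1)μ²((n-2)μ² + 2(λ-μ)²) and (Σ_{α=1}^n ‖B_α‖²)² = (n-1)²((1/n)(λ-μ)² + 2μ²)². -/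
open Matrix

/-!
With matrix units `E i j = single i j 1`, the trace-free shape operators are
`B₀ = (λ - μ) (E₀₀ - I/n)` and `B_α = μ (E₀α + E_α₀)` for `α ≠ 0`. Scalar matrices drop out of
commutators, and `[E₀₀, E₀β + E_β₀] = E₀β - E_β₀`, `[E₀α + E_α₀, E₀β + E_β₀] = E_αβ - E_βα` for
distinct nonzero `α, β`; all these antisymmetric units, and the symmetric ones `E₀α + E_α₀`, have
squared norm `2`, while `‖E₀₀ - I/n‖² = 1 - 1/n`. Counting the nonzero terms gives both sums.
-/

section
variable {n : ℕ}

noncomputable def traceFree (A : Matrix (Fin n) (Fin n) ℝ) : Matrix (Fin n) (Fin n) ℝ :=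
  A - (A.trace / n) • 1

lemma frobSq_smul (c : ℝ) (A : Matrix (Fin n) (Fin n) ℝ) : frobSq (c • A) = c ^ 2 * frobSq A := by
  simp only [frobSq, transpose_smul, smul_mul_smul_comm, trace_smul, smul_eq_mul, sq]

lemma frobSq_neg (A : Matrix (Fin n) (Fin n) ℝ) : frobSq (-A) = frobSq A := by
  simp only [frobSq, transpose_neg, neg_mul_neg]

@[simp]
lemma frobSq_zero : frobSq (0 : Matrix (Fin n) (Fin n) ℝ) = 0 := by
  simp [frobSq]

lemma mcomm_self (A : Matrix (Fin n) (Fin n) ℝ) : mcomm A A = 0 := sub_self _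

lemma mcomm_swap (A B : Matrix (Fin n) (Fin n) ℝ) : mcomm B A = -mcomm A B :=
  (neg_sub _ _).symm

lemma mcomm_smul_smul (a b : ℝ) (A B : Matrix (Fin n) (Fin n) ℝ) :
    mcomm (a • A) (b • B) = (a * b) • mcomm A B := by
  simp only [mcomm, smul_mul_smul_comm, smul_sub, mul_comm b a]

lemma mcomm_sub_smul_one_left (c : ℝ) (A B : Matrix (Fin n) (Fin n) ℝ) :
    mcomm (A - c • 1) B = mcomm A B := by
  simp only [mcomm, sub_mul, mul_sub, smul_mul_assoc, mul_smul_comm, one_mul, mul_one]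
  abel

lemma traceFree_of_trace_eq_zero {A : Matrix (Fin n) (Fin n) ℝ} (h : A.trace = 0) :
    traceFree A = A := by
  simp [traceFree, h]

lemma traceFree_smul_add_smul_one (a c : ℝ) (A : Matrix (Fin n) (Fin n) ℝ) (hn : n ≠ 0) :
    traceFree (a • A + c • 1) = a • traceFree A := by
  have : (n : ℝ) ≠ 0 := by exact_mod_cast hn
  simp only [traceFree, trace_add, trace_smul, trace_one, Fintype.card_fin, smul_eq_mul, smul_sub,
    smul_smul]
  rw [show (a * A.trace + c * n) / n = a * (A.trace / n) + c by field_simp, add_smul]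
  abel

lemma frobSq_traceFree_single_self (i : Fin n) :
    frobSq (traceFree (single i i (1 : ℝ))) = 1 - 1 / n := by
  have : (n : ℝ) ≠ 0 := by exact_mod_cast i.pos.ne'
  simp only [frobSq, traceFree, trace_single_eq_same, transpose_sub, transpose_single,
    transpose_smul, transpose_one, sub_mul, mul_sub, single_mul_single_same, mul_one, one_mul,
    smul_mul_assoc, mul_smul_comm, trace_sub, trace_smul, trace_one, Fintype.card_fin, smul_eq_mul]
  field_simp
  ring

lemma frobSq_single_sub_single {i j : Fin n} (h : i ≠ j) :
    frobSq (single i j (1 : ℝ) - single j i 1) = 2 := by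
  simp [frobSq, sub_mul, mul_sub, h, h.symm]
  norm_num

lemma frobSq_single_add_single {i j : Fin n} (h : i ≠ j) :
    frobSq (single i j (1 : ℝ) + single j i 1) = 2 := by
  simp [frobSq, add_mul, mul_add, h, h.symm]
  norm_num

lemma mcomm_single_self_single_add_single {i j : Fin n} (h : i ≠ j) :
    mcomm (single i i (1 : ℝ)) (single i j 1 + single j i 1) = single i j 1 - single j i 1 := by
  simp [mcomm, mul_add, add_mul, h, h.symm]

lemma mcomm_single_add_single {a b c : Fin n} (ha : c ≠ a) (hb : c ≠ b) (hab : a ≠ b) :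
    mcomm (single c a (1 : ℝ) + single a c 1) (single c b 1 + single b c 1) =
      single a b 1 - single b a 1 := by
  simp [mcomm, mul_add, add_mul, ha, hb, hab, ha.symm, hb.symm, hab.symm]

end

namespace HUmbilical

variable (k : ℕ) (lam mu : ℝ)

noncomputable def shape (α : Fin (k + 2)) : Matrix (Fin (k + 2)) (Fin (k + 2)) ℝ :=
  if α = 0 then Matrix.diagonal (fun i => if i = 0 then lam else mu)
  else fun i j => if (i = 0 ∧ j = α) ∨ (i = α ∧ j = 0) then mu else 0

noncomputable def traceFreeShape (α : Fin (k + 2)) : Matrix (Fin (k + 2)) (Fin (k + 2)) ℝ :=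
  traceFree (shape k lam mu α)

lemma shape_zero : shape k lam mu 0 = (lam - mu) • single 0 0 1 + mu • 1 := by
  simp only [shape, ↓reduceIte]
  ext i j
  simp only [diagonal_apply, Matrix.add_apply, Matrix.smul_apply, one_apply,
    single_apply, smul_eq_mul]
  split_ifs <;> grind

lemma shape_of_ne_zero {α : Fin (k + 2)} (hα : α ≠ 0) :
    shape k lam mu α = mu • (single 0 α 1 + single α 0 1) := by
  simp only [shape, hα, ↓reduceIte]
  ext i j
  simp only [Matrix.smul_apply, Matrix.add_apply, single_apply, smul_eq_mul]
  split_ifs <;> grind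

lemma traceFreeShape_zero :
    traceFreeShape k lam mu 0 = (lam - mu) • traceFree (single 0 0 1) := by
  rw [traceFreeShape, shape_zero, traceFree_smul_add_smul_one _ _ _ (by omega)]

lemma traceFreeShape_of_ne_zero {α : Fin (k + 2)} (hα : α ≠ 0) :
    traceFreeShape k lam mu α = mu • (single 0 α 1 + single α 0 1) := by
  rw [traceFreeShape, shape_of_ne_zero k lam mu hα, traceFree_of_trace_eq_zero]
  simp [trace_single_eq_of_ne, hα, Ne.symm hα]

lemma frobSq_mcomm_traceFreeShape_zero {β : Fin (k + 2)} (hβ : β ≠ 0) :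
    frobSq (mcomm (traceFreeShape k lam mu 0) (traceFreeShape k lam mu β)) =
      2 * (lam - mu) ^ 2 * mu ^ 2 := by
  rw [traceFreeShape_zero, traceFreeShape_of_ne_zero k lam mu hβ, mcomm_smul_smul, traceFree,
    mcomm_sub_smul_one_left, mcomm_single_self_single_add_single hβ.symm, frobSq_smul,
    frobSq_single_sub_single hβ.symm]
  ring

lemma frobSq_mcomm_traceFreeShape_of_ne_zero {α β : Fin (k + 2)} (hα : α ≠ 0) (hβ : β ≠ 0) :
    frobSq (mcomm (traceFreeShape k lam mu α) (traceFreeShape k lam mu β)) =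
      if α = β then 0 else 2 * mu ^ 4 := by
  split_ifs with hαβ
  · rw [hαβ, mcomm_self, frobSq_zero]
  · rw [traceFreeShape_of_ne_zero k lam mu hα, traceFreeShape_of_ne_zero k lam mu hβ,
      mcomm_smul_smul, mcomm_single_add_single hα.symm hβ.symm hαβ, frobSq_smul,
      frobSq_single_sub_single hαβ]
    ring

lemma frobSq_traceFreeShape_zero :
    frobSq (traceFreeShape k lam mu 0) = (lam - mu) ^ 2 * (1 - 1 / ((k + 2 : ℕ) : ℝ)) := by
  rw [traceFreeShape_zero, frobSq_smul, frobSq_traceFree_single_self]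

lemma frobSq_traceFreeShape_of_ne_zero {α : Fin (k + 2)} (hα : α ≠ 0) :
    frobSq (traceFreeShape k lam mu α) = 2 * mu ^ 2 := by
  rw [traceFreeShape_of_ne_zero k lam mu hα, frobSq_smul, frobSq_single_add_single hα.symm]
  ring

lemma sum_frobSq_mcomm_traceFreeShape_zero :
    ∑ β, frobSq (mcomm (traceFreeShape k lam mu 0) (traceFreeShape k lam mu β)) =
      (k + 1) * (2 * (lam - mu) ^ 2 * mu ^ 2) := by
  simp only [Fin.sum_univ_succ, mcomm_self, frobSq_zero, zero_add,
    frobSq_mcomm_traceFreeShape_zero k lam mu (Fin.succ_ne_zero _), Finset.sum_const,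
    Finset.card_univ, Fintype.card_fin, nsmul_eq_mul]
  push_cast
  ring

lemma sum_frobSq_mcomm_traceFreeShape_succ (i : Fin (k + 1)) :
    ∑ β, frobSq (mcomm (traceFreeShape k lam mu i.succ) (traceFreeShape k lam mu β)) =
      2 * (lam - mu) ^ 2 * mu ^ 2 + k * (2 * mu ^ 4) := by
  rw [Fin.sum_univ_succ, mcomm_swap, frobSq_neg,
    frobSq_mcomm_traceFreeShape_zero k lam mu i.succ_ne_zero]
  simp only [frobSq_mcomm_traceFreeShape_of_ne_zero k lam mu i.succ_ne_zero (Fin.succ_ne_zero _),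
    Fin.succ_inj]
  simp [Finset.sum_ite, Finset.filter_ne]

lemma sum_sum_frobSq_mcomm_traceFreeShape :
    ∑ α, ∑ β, frobSq (mcomm (traceFreeShape k lam mu α) (traceFreeShape k lam mu β)) =
      2 * (((k + 2 : ℕ) : ℝ) - 1) * mu ^ 2 *
        ((((k + 2 : ℕ) : ℝ) - 2) * mu ^ 2 + 2 * (lam - mu) ^ 2) := by
  rw [Fin.sum_univ_succ, sum_frobSq_mcomm_traceFreeShape_zero]
  simp only [sum_frobSq_mcomm_traceFreeShape_succ, Finset.sum_const, Finset.card_univ,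
    Fintype.card_fin, nsmul_eq_mul]
  push_cast
  ring

lemma sum_frobSq_traceFreeShape :
    ∑ α, frobSq (traceFreeShape k lam mu α) =
      (((k + 2 : ℕ) : ℝ) - 1) * ((1 / ((k + 2 : ℕ) : ℝ)) * (lam - mu) ^ 2 + 2 * mu ^ 2) := by
  simp only [Fin.sum_univ_succ, frobSq_traceFreeShape_zero,
    frobSq_traceFreeShape_of_ne_zero k lam mu (Fin.succ_ne_zero _), Finset.sum_const,
    Finset.card_univ, Fintype.card_fin, nsmul_eq_mul]
  have : ((k + 2 : ℕ) : ℝ) ≠ 0 := by positivity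
  field_simp
  push_cast
  ring

end HUmbilical

/-- Commutator norms for the trace-free shape operators of an H-umbilical
Lagrangian immersion in ℂⁿ (here n = k + 2 ≥ 2). -/
theorem h_umbilical_computation (k : ℕ) (lam mu : ℝ) :
    let n : ℕ := k + 2
    let A : Fin n → Matrix (Fin n) (Fin n) ℝ := fun α =>
      if α = 0 then Matrix.diagonal (fun i => if i = 0 then lam else mu)
      else fun i j => if (i = 0 ∧ j = α) ∨ (i = α ∧ j = 0) then mu else 0
    let B : Fin n → Matrix (Fin n) (Fin n) ℝ := fun α =>
      A α - ((A α).trace / (n : ℝ)) • (1 : Matrix (Fin n) (Fin n) ℝ)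
    (∑ α, ∑ β, frobSq (mcomm (B α) (B β)) =
        2 * ((n : ℝ) - 1) * mu ^ 2 * (((n : ℝ) - 2) * mu ^ 2 + 2 * (lam - mu) ^ 2)) ∧
      ((∑ α, frobSq (B α)) ^ 2 =
        ((n : ℝ) - 1) ^ 2 * ((1 / (n : ℝ)) * (lam - mu) ^ 2 + 2 * mu ^ 2) ^ 2) := by
  intro n A B
  exact ⟨HUmbilical.sum_sum_frobSq_mcomm_traceFreeShape k lam mu,
    by rw [← mul_pow]; exact congrArg (· ^ 2) (HUmbilical.sum_frobSq_traceFreeShape k lam mu)⟩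
end
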